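/- Let d ≥ 3 and let φ : ℝ^d → ℝ^d be twice continuously differentiable with compact support. Suppose that at every x ∈ ℝ^d the Jacobian matrix J(x) = (∂_j φ_i(x))_{ij} has vanishing symmetric trace-free part, i.e. (1/2)(J(x) + J(x)ᵀ) − ((tr J(x))/d)·I = 0. Then φ(x) = 0 for all x ∈ ℝ^d. -/

import Mathlib

open Matrix MeasureTheory

/-- The Jacobian matrix `J(x)_{ij} = ∂_j φ_i (x)` of a vector field on `ℝᵈ`. -/
noncomputable def jacobian {d : ℕ}
    (φ : EuclideanSpace ℝ (Fin d) → EuclideanSpace ℝ (Fin d))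
    (x : EuclideanSpace ℝ (Fin d)) : Matrix (Fin d) (Fin d) ℝ :=
  Matrix.of fun i j => fderiv ℝ φ x (EuclideanSpace.single j (1 : ℝ)) i

/-- The symmetric trace-free part `stf(M) = (1/2)(M + Mᵀ) − ((tr M)/d)·I`. -/
noncomputable def stfMat {d : ℕ} (M : Matrix (Fin d) (Fin d) ℝ) :
    Matrix (Fin d) (Fin d) ℝ :=
  ((1 : ℝ) / 2) • (M + Mᵀ) - (M.trace / (d : ℝ)) • (1 : Matrix (Fin d) (Fin d) ℝ)

/-!
Write `T i j k = ∂_k ∂_j φ_i`. The equation `stf(Dφ) = 0` makes `T` antisymmetric in `(i, j)`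
off the diagonal and `T i i k` independent of `i`; together with the symmetry in `(j, k)` this kills
`T` at three distinct indices and expresses every entry through the `T i i i`. For `k ≠ i` pick a
third index `j` (this is where `d ≥ 3` enters): `∂_j φ_i` is then constant along `e_k`, hence so
is `T i i i = -T i j j`, and compact support forces it to vanish. So `D²φ = 0`, and compact support
gives first `Dφ = 0` and then `φ = 0`.
-/

section stfMat

variable {d : ℕ} {M : Matrix (Fin d) (Fin d) ℝ}

theorem stfMat_apply (i j : Fin d) :
    stfMat M i j = (M i j + M j i) / 2 - if i = j then M.trace / d else 0 := by
  simp only [stfMat, Matrix.sub_apply, Matrix.smul_apply, Matrix.add_apply, transpose_apply,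
    one_apply, smul_eq_mul, mul_ite, mul_one, mul_zero]
  ring

theorem apply_eq_neg_of_stfMat_eq_zero (h : stfMat M = 0) {i j : Fin d} (hij : i ≠ j) :
    M i j = -M j i := by
  have := stfMat_apply (M := M) i j
  rw [h, Matrix.zero_apply, if_neg hij] at this
  linarith

theorem diag_eq_of_stfMat_eq_zero (h : stfMat M = 0) (i j : Fin d) : M i i = M j j := by
  have hi := stfMat_apply (M := M) i i
  have hj := stfMat_apply (M := M) j j
  rw [h, Matrix.zero_apply, if_pos rfl] at hi hj
  linarith

end stfMat

/-- The relations satisfied by `T i j k = ∂_k ∂_j φ_i` when `stf(Dφ) = 0`. -/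
structure IsConformalKillingHessian {ι : Type*} (T : ι → ι → ι → ℝ) : Prop where
  symm : ∀ i j k, T i j k = T i k j
  antisymm : ∀ i j k, i ≠ j → T i j k = -T j i k
  diag_eq : ∀ i j k, T i i k = T j j k

namespace IsConformalKillingHessian

variable {ι : Type*} {T : ι → ι → ι → ℝ}

theorem eq_zero_of_pairwise_ne (hT : IsConformalKillingHessian T) {i j k : ι} (hij : i ≠ j)
    (hik : i ≠ k) (hjk : j ≠ k) :
    T i j k = 0 := by
  -- going once around the six permutations of `(i, j, k)` flips the sign
  have := hT.antisymm i j k hij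
  have := hT.symm j i k
  have := hT.antisymm j k i hjk
  have := hT.symm k j i
  have := hT.antisymm k i j hik.symm
  have := hT.symm i k j
  linarith

theorem apply_ne_self_self (hT : IsConformalKillingHessian T) {i j : ι} (hij : i ≠ j) :
    T i j j = -T i i i := by
  rw [hT.antisymm i j j hij, hT.symm, hT.diag_eq j i i]

theorem eq_zero_of_diag_eq_zero (hT : IsConformalKillingHessian T) (h : ∀ i, T i i i = 0)
    (i j k : ι) : T i j k = 0 := by
  rcases eq_or_ne i j with rfl | hij
  · rw [hT.diag_eq i k k]; exact h k
  rcases eq_or_ne j k with rfl | hjk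
  · rw [hT.apply_ne_self_self hij, h, neg_zero]
  rcases eq_or_ne i k with rfl | hik
  · rw [hT.symm, hT.diag_eq i j j]; exact h j
  exact hT.eq_zero_of_pairwise_ne hij hik hjk

end IsConformalKillingHessian

theorem HasCompactSupport.eq_zero_of_forall_eq {α F : Type*} [TopologicalSpace α]
    [NoncompactSpace α] [Zero F] {f : α → F} (hf : HasCompactSupport f)
    (h : ∀ x y, f x = f y) (x : α) : f x = 0 := by
  by_contra hx
  have : tsupport f = Set.univ := Set.eq_univ_of_forall fun y =>
    subset_tsupport f (by rwa [Function.mem_support, h y x])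
  exact noncompact_univ α (this ▸ hf)

theorem HasCompactSupport.eq_zero_of_forall_add_smul_eq {E F : Type*} [NormedAddCommGroup E]
    [NormedSpace ℝ E] [Zero F] {g : E → F} (hg : HasCompactSupport g) {v : E} (hv : v ≠ 0)
    (h : ∀ x (t : ℝ), g (x + t • v) = g x) (x : E) : g x = 0 := by
  have hline : HasCompactSupport fun t : ℝ => g (x + t • v) :=
    hg.comp_isClosedEmbedding
      ((Homeomorph.addLeft x).isClosedEmbedding.comp (isClosedEmbedding_smul_left hv))
  simpa using hline.eq_zero_of_forall_eq (fun s t => by rw [h, h]) 0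

theorem add_smul_eq_of_fderiv_apply_eq_zero {E F : Type*} [NormedAddCommGroup E]
    [NormedSpace ℝ E] [NormedAddCommGroup F] [NormedSpace ℝ F] {g : E → F}
    (hg : Differentiable ℝ g) {v : E} (h : ∀ y, fderiv ℝ g y v = 0) (x : E) (t : ℝ) :
    g (x + t • v) = g x := by
  have hline : ∀ s : ℝ, HasDerivAt (fun s : ℝ => g (x + s • v)) 0 s := fun s => by
    simpa [h, Function.comp_def] using (hg _).hasFDerivAt.comp_hasDerivAt s
      (((hasDerivAt_id s).smul_const v).const_add x)
  simpa using is_const_of_deriv_eq_zero (fun s => (hline s).differentiableAt)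
    (fun s => (hline s).deriv) t 0

section SecondPartial

variable {d : ℕ} {φ : EuclideanSpace ℝ (Fin d) → EuclideanSpace ℝ (Fin d)}

noncomputable def secondPartial (φ : EuclideanSpace ℝ (Fin d) → EuclideanSpace ℝ (Fin d))
    (x : EuclideanSpace ℝ (Fin d)) (i j k : Fin d) : ℝ :=
  fderiv ℝ (fderiv ℝ φ) x (EuclideanSpace.single k 1) (EuclideanSpace.single j 1) i

theorem hasFDerivAt_jacobian_apply {x : EuclideanSpace ℝ (Fin d)}
    (hφ : DifferentiableAt ℝ (fderiv ℝ φ) x) (i j : Fin d) :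
    HasFDerivAt (fun y => jacobian φ y i j)
      (((EuclideanSpace.proj i).comp (ContinuousLinearMap.apply ℝ _
        (EuclideanSpace.single j (1 : ℝ)))).comp (fderiv ℝ (fderiv ℝ φ) x)) x :=
  ((EuclideanSpace.proj i).comp (ContinuousLinearMap.apply ℝ (EuclideanSpace ℝ (Fin d))
    (EuclideanSpace.single j (1 : ℝ)))).hasFDerivAt.comp x hφ.hasFDerivAt

theorem fderiv_jacobian_apply_single {x : EuclideanSpace ℝ (Fin d)}
    (hφ : DifferentiableAt ℝ (fderiv ℝ φ) x) (i j k : Fin d) :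
    fderiv ℝ (fun y => jacobian φ y i j) x (EuclideanSpace.single k 1) =
      secondPartial φ x i j k := by
  rw [(hasFDerivAt_jacobian_apply hφ i j).fderiv]
  rfl

theorem secondPartial_comm (hφ : ContDiff ℝ 2 φ) (x : EuclideanSpace ℝ (Fin d))
    (i j k : Fin d) :
    secondPartial φ x i j k = secondPartial φ x i k j := by
  rw [secondPartial, secondPartial, hφ.contDiffAt.isSymmSndFDerivAt (by simp)]

theorem isConformalKillingHessian_secondPartial (hφ : ContDiff ℝ 2 φ)
    (hstf : ∀ x, stfMat (jacobian φ x) = 0) (x : EuclideanSpace ℝ (Fin d)) :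
    IsConformalKillingHessian (secondPartial φ x) := by
  have hφ' : DifferentiableAt ℝ (fderiv ℝ φ) x :=
    (hφ.fderiv_right (m := 1) le_rfl).differentiable one_ne_zero x
  refine ⟨secondPartial_comm hφ x, fun i j k hij => ?_, fun i j k => ?_⟩
  · have hJ : (fun y => jacobian φ y i j) = fun y => -jacobian φ y j i :=
      funext fun y => apply_eq_neg_of_stfMat_eq_zero (hstf y) hij
    rw [← fderiv_jacobian_apply_single hφ', ← fderiv_jacobian_apply_single hφ', hJ,
      fderiv_fun_neg, _root_.neg_apply]
  · have hJ : (fun y => jacobian φ y i i) = fun y => jacobian φ y j j :=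
      funext fun y => diag_eq_of_stfMat_eq_zero (hstf y) i j
    rw [← fderiv_jacobian_apply_single hφ', ← fderiv_jacobian_apply_single hφ', hJ]

theorem secondPartial_self_add_smul (hφ : ContDiff ℝ 2 φ)
    (hstf : ∀ x, stfMat (jacobian φ x) = 0)
    {i j k : Fin d} (hij : i ≠ j) (hik : i ≠ k) (hjk : j ≠ k) (x : EuclideanSpace ℝ (Fin d))
    (t : ℝ) :
    secondPartial φ (x + t • EuclideanSpace.single k 1) i i i = secondPartial φ x i i i := by
  have hφ' : Differentiable ℝ (fderiv ℝ φ) :=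
    (hφ.fderiv_right (m := 1) le_rfl).differentiable one_ne_zero
  have hT := isConformalKillingHessian_secondPartial hφ hstf
  -- `∂_k J_ij = 0`, so `J_ij` is invariant under translation along `e_k`, and so is `∂_j J_ij`.
  have hk : ∀ z, fderiv ℝ (fun y => jacobian φ y i j) z (EuclideanSpace.single k 1) = 0 :=
    fun z => (fderiv_jacobian_apply_single (hφ' z) i j k).trans
      ((hT z).eq_zero_of_pairwise_ne hij hik hjk)
  have hJ : (fun y => jacobian φ (y + t • EuclideanSpace.single k 1) i j) =
      fun y => jacobian φ y i j :=
    funext fun y => add_smul_eq_of_fderiv_apply_eq_zero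
      (fun z => (hasFDerivAt_jacobian_apply (hφ' z) i j).differentiableAt) hk y t
  have hJ' : secondPartial φ (x + t • EuclideanSpace.single k 1) i j j =
      secondPartial φ x i j j := by
    rw [← fderiv_jacobian_apply_single (hφ' _), ← fderiv_jacobian_apply_single (hφ' _),
      ← fderiv_comp_add_right, hJ]
  rwa [(hT _).apply_ne_self_self hij, (hT _).apply_ne_self_self hij, neg_inj] at hJ'

theorem secondPartial_self_eq_zero (hd : 3 ≤ d) (hφ : ContDiff ℝ 2 φ)
    (hsupp : HasCompactSupport φ) (hstf : ∀ x, stfMat (jacobian φ x) = 0)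
    (x : EuclideanSpace ℝ (Fin d)) (i : Fin d) : secondPartial φ x i i i = 0 := by
  obtain ⟨k, hki, -⟩ := Fin.exists_ne_and_ne_of_two_lt i i (by omega)
  obtain ⟨j, hji, hjk⟩ := Fin.exists_ne_and_ne_of_two_lt i k (by omega)
  have hT : HasCompactSupport fun y => secondPartial φ y i i i :=
    ((hsupp.fderiv ℝ).fderiv ℝ).comp_left
      (g := fun B : EuclideanSpace ℝ (Fin d) →L[ℝ] EuclideanSpace ℝ (Fin d) →L[ℝ]
        EuclideanSpace ℝ (Fin d) => B (EuclideanSpace.single i 1) (EuclideanSpace.single i 1) i)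
      rfl
  exact hT.eq_zero_of_forall_add_smul_eq (by simp)
    (secondPartial_self_add_smul hφ hstf hji.symm hki.symm hjk) x

theorem fderiv_fderiv_eq_zero_of_secondPartial_eq_zero {x : EuclideanSpace ℝ (Fin d)}
    (h : ∀ i j k, secondPartial φ x i j k = 0) : fderiv ℝ (fderiv ℝ φ) x = 0 := by
  refine ContinuousLinearMap.coe_injective
    ((EuclideanSpace.basisFun (Fin d) ℝ).toBasis.ext fun k => ContinuousLinearMap.coe_injective ?_)
  refine (EuclideanSpace.basisFun (Fin d) ℝ).toBasis.ext fun j => ?_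
  ext i
  simpa [secondPartial] using h i j k

end SecondPartial

/-- **Rigidity for compactly supported conformal Killing fields, `d ≥ 3`.**
If `φ : ℝᵈ → ℝᵈ` is C², compactly supported, and `stf(Dφ(x)) = 0` everywhere,
then `φ ≡ 0`. -/
theorem compact_support_conformal_killing_eq_zero
    (d : ℕ) (hd : 3 ≤ d)
    (φ : EuclideanSpace ℝ (Fin d) → EuclideanSpace ℝ (Fin d))
    (hφ : ContDiff ℝ 2 φ) (hsupp : HasCompactSupport φ)
    (hstf : ∀ x, stfMat (jacobian φ x) = 0) :
    ∀ x, φ x = 0 := by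
  have : NeZero d := ⟨by omega⟩
  have hD2 : ∀ x, fderiv ℝ (fderiv ℝ φ) x = 0 := fun x =>
    fderiv_fderiv_eq_zero_of_secondPartial_eq_zero
      ((isConformalKillingHessian_secondPartial hφ hstf x).eq_zero_of_diag_eq_zero
        (secondPartial_self_eq_zero hd hφ hsupp hstf x))
  have hD : ∀ x, fderiv ℝ φ x = 0 := (hsupp.fderiv ℝ).eq_zero_of_forall_eq
    (is_const_of_fderiv_eq_zero ((hφ.fderiv_right (m := 1) le_rfl).differentiable one_ne_zero) hD2)
  exact hsupp.eq_zero_of_forall_eq (is_const_of_fderiv_eq_zero (hφ.differentiable two_ne_zero) hD)
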